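/- Let n ≥ 3 be odd. The set of full-rank subgroups X of the weight lattice Λ of SL(n+1) such that X contains σ_1, …, σ_{n−1} and the family {α_1^∨|_X, α_3^∨|_X, …, α_n^∨|_X} is part of a ℤ-basis of X^* is finite, of cardinality σ((n+1)/2), the sum of all positive divisors of (n+1)/2. -/

import Mathlib

/-- The fundamental weights `ω_1, …, ω_n` of `SL(n+1)` in the weight lattice
`Λ = ℤⁿ`: `ω_j` is the `j`-th standard basis vector for `1 ≤ j ≤ n`, and by
convention `ω_0 = ω_{n+1} = 0`. -/
def w (n : ℕ) (j : ℕ) : Fin n → ℤ := fun i => if (i : ℕ) + 1 = j then 1 else 0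

/-- The simple roots of `SL(n+1)`: `α_i = 2ω_i − ω_{i−1} − ω_{i+1}` for `1 ≤ i ≤ n`. -/
def sroot (n : ℕ) (i : ℕ) : Fin n → ℤ := 2 • w n i - w n (i - 1) - w n (i + 1)

/-- `σ_i = α_i + α_{i+1}` for `1 ≤ i ≤ n−1`. -/
def sig (n : ℕ) (i : ℕ) : Fin n → ℤ := sroot n i + sroot n (i + 1)

/-- `ℤS⁺`, the subgroup of `Λ` generated by `σ_1, …, σ_{n−1}`. -/
def ZSplus (n : ℕ) : Submodule ℤ (Fin n → ℤ) :=
  Submodule.span ℤ (sig n '' Set.Icc 1 (n - 1))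

/-- A family of elements of a `ℤ`-module is *part of a basis* if it can be extended
to (i.e. realized injectively inside) a `ℤ`-basis. -/
def IsPartOfBasis {M : Type} [AddCommGroup M] [Module ℤ M] {ι : Type} (v : ι → M) : Prop :=
  ∃ (κ : Type) (b : Module.Basis κ ℤ M) (f : ι → κ), Function.Injective f ∧ ∀ i, b (f i) = v i

/-- The family of restrictions to `X` of the coroots with odd index
`α_1^∨, α_3^∨, …`, where `α_i^∨` is the `i`-th coordinate functional on `Λ = ℤⁿ`
(i.e. `⟨α_i^∨, ω_j⟩ = δ_{ij}`), viewed as elements of `X^* = Hom_ℤ(X, ℤ)`.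
The odd indices `1, 3, …` in `{1, …, n}` are enumerated by `j ↦ 2j+1`. -/
def oddCoroots (n : ℕ) (X : Submodule ℤ (Fin n → ℤ)) :
    Fin ((n + 1) / 2) → (X →ₗ[ℤ] ℤ) := fun j =>
  (LinearMap.proj (R := ℤ) (φ := fun _ : Fin n => ℤ)
    ⟨2 * (j : ℕ), by have := j.isLt; omega⟩).domRestrict X

/-!
Let `m = (n+1)/2`, `s` the sum of the odd-index coordinates and `t` the coordinates weighted
by `⌊j/2⌋`. Both vanish on every `σ_i` except `t σ_{n-1} = m`, and `ker s ∩ ker t ⊆ ℤS⁺`, since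
`ω_j ≡ s(ω_j) ω_1 + t(ω_j) ω_2` modulo `ℤS⁺`. The coroot condition says that restriction to the
odd coordinates maps `X` onto `ℤ^m`; as `s` is the sum of these coordinates, `X` contains some
`x₀` with `s x₀ = 1`. Hence `X` is determined by the ideal `t (X ∩ ker s) = dℤ ∋ m` and the
residue `r` of `t x₀` modulo `d`: `X = {x | d ∣ t x - r s x}`. Conversely each of these lattices,
for `d ∣ m` and `0 ≤ r < d`, qualifies, and they are pairwise distinct, so there are
`∑_{d ∣ m} d = σ(m)` of them.
-/

open Module

section PartOfBasis

variable {M : Type} [AddCommGroup M] [Free ℤ M] [Module.Finite ℤ M] {ι : Type}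
  {f : ι → Dual ℤ M}

theorem IsPartOfBasis.surjective_pi (h : IsPartOfBasis f) :
    Function.Surjective (LinearMap.pi f) := by
  obtain ⟨κ, b, g, hg, hbg⟩ := h
  intro y
  refine ⟨(evalEquiv ℤ M).symm (b.constr ℤ (Function.extend g y 0)), funext fun i => ?_⟩
  rw [LinearMap.pi_apply, apply_evalEquiv_symm_apply, ← hbg, b.constr_basis, hg.extend_apply]

theorem isPartOfBasis_of_surjective_pi [Finite ι] (h : Function.Surjective (LinearMap.pi f)) :
    IsPartOfBasis f := by
  classical
  obtain ⟨l, hl⟩ := (LinearMap.pi f).exists_rightInverse_of_surjective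
    (LinearMap.range_eq_top_of_surjective _ h)
  obtain ⟨e, -, he⟩ := (LinearMap.exact_subtype_ker_map _).splitSurjectiveEquiv
    (Submodule.injective_subtype _) ⟨l, hl⟩
  let b := ((Free.chooseBasis ℤ (LinearMap.ker (LinearMap.pi f))).prod
    (Pi.basisFun ℤ ι)).map e.symm
  refine ⟨_, b.dualBasis, Sum.inr, Sum.inr_injective, fun i => b.ext fun k => ?_⟩
  rw [b.dualBasis_apply_self, ← LinearMap.pi_apply f]
  simp only [he]
  cases k <;> simp [b, Pi.single_apply, eq_comm]

end PartOfBasis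

theorem Submodule.finrank_eq_of_smul_mem {M : Type} [AddCommGroup M] [Free ℤ M]
    [Module.Finite ℤ M] (X : Submodule ℤ M) {d : ℤ} (hd : d ≠ 0) (h : ∀ x, d • x ∈ X) :
    finrank ℤ X = finrank ℤ M :=
  le_antisymm (Submodule.finrank_le X) <| LinearMap.finrank_le_finrank_of_injective
    (f := LinearMap.codRestrict X (d • LinearMap.id) h)
    fun x y hxy => smul_right_injective M hd (by simpa using congrArg Subtype.val hxy)

section Congruence

variable {M : Type} [AddCommGroup M] (s t : M →ₗ[ℤ] ℤ)

def congrSubmodule (d r : ℕ) : Submodule ℤ M :=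
  Submodule.comap (t - (r : ℤ) • s) (Ideal.span {(d : ℤ)})

variable {s t}

theorem mem_congrSubmodule {d r : ℕ} {x : M} :
    x ∈ congrSubmodule s t d r ↔ (d : ℤ) ∣ t x - r * s x := by
  simp [congrSubmodule, Ideal.mem_span_singleton]

theorem smul_mem_congrSubmodule (d r : ℕ) (x : M) : (d : ℤ) • x ∈ congrSubmodule s t d r :=
  mem_congrSubmodule.mpr ⟨t x - r * s x, by simp only [map_smul, smul_eq_mul]; ring⟩

theorem congrSubmodule_injective {e₁ e₂ : M} (hs₁ : s e₁ = 1) (ht₁ : t e₁ = 0)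
    (hs₂ : s e₂ = 0) (ht₂ : t e₂ = 1) {d r d' r' : ℕ} (hr : r < d) (hr' : r' < d')
    (h : congrSubmodule s t d r = congrSubmodule s t d' r') : d = d' ∧ r = r' := by
  have hdd : d = d' := by
    have h₁ := smul_mem_congrSubmodule (s := s) (t := t) d r e₂
    have h₂ := smul_mem_congrSubmodule (s := s) (t := t) d' r' e₂
    rw [h, mem_congrSubmodule] at h₁
    rw [← h, mem_congrSubmodule] at h₂
    simp only [map_smul, hs₂, ht₂, smul_eq_mul] at h₁ h₂
    exact Nat.dvd_antisymm (Int.natCast_dvd_natCast.mp (by simpa using h₂))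
      (Int.natCast_dvd_natCast.mp (by simpa using h₁))
  subst hdd
  have hmem : e₁ + (r : ℤ) • e₂ ∈ congrSubmodule s t d r := by
    simp [mem_congrSubmodule, hs₁, ht₁, hs₂, ht₂]
  rw [h, mem_congrSubmodule] at hmem
  simp only [map_add, map_smul, hs₁, ht₁, hs₂, ht₂, smul_eq_mul] at hmem
  have := Int.eq_zero_of_abs_lt_dvd (by simpa using hmem) (by rw [abs_lt]; omega)
  omega

theorem mem_iff_map_of_ker_inf_le {X : Submodule ℤ M}
    (hker : LinearMap.ker s ⊓ LinearMap.ker t ≤ X) {y : M} (hy : s y = 0) :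
    y ∈ X ↔ t y ∈ (X ⊓ LinearMap.ker s).map t := by
  refine ⟨fun hyX => ⟨y, ⟨hyX, hy⟩, rfl⟩, fun ⟨z, ⟨hzX, hzs⟩, hzt⟩ => ?_⟩
  have : y - z ∈ X := hker ⟨by simp_all, by simp_all⟩
  simpa using X.add_mem this hzX

theorem exists_eq_congrSubmodule {X : Submodule ℤ M}
    (hker : LinearMap.ker s ⊓ LinearMap.ker t ≤ X) {x₀ : M} (hx₀ : x₀ ∈ X)
    (hsx₀ : s x₀ = 1)
    {y : M} (hy : y ∈ X) (hsy : s y = 0) {m : ℕ} (hm : 0 < m) (hty : t y = m) :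
    ∃ d r : ℕ, d ∣ m ∧ r < d ∧ X = congrSubmodule s t d r := by
  obtain ⟨g, hg⟩ := Submodule.IsPrincipal.principal ((X ⊓ LinearMap.ker s).map t)
  have hT : ∀ a, a ∈ (X ⊓ LinearMap.ker s).map t ↔ (g.natAbs : ℤ) ∣ a := by
    intro a
    rw [hg, ← Ideal.span, ← Int.span_natAbs, Ideal.mem_span_singleton]
  have hdm : g.natAbs ∣ m := Int.natCast_dvd_natCast.mp ((hT m).mp ⟨y, ⟨hy, hsy⟩, hty⟩)
  set d := g.natAbs
  have hd : (0 : ℤ) < d := by exact_mod_cast Nat.pos_of_dvd_of_pos hdm hm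
  obtain ⟨r, hrd, hr⟩ : ∃ r : ℕ, r < d ∧ (d : ℤ) ∣ t x₀ - r := by
    have := Int.emod_nonneg (t x₀) hd.ne'
    have := Int.emod_lt_of_pos (t x₀) hd
    exact ⟨(t x₀ % d).toNat, by omega, Int.dvd_self_sub_of_emod_eq (by omega)⟩
  have hX : ∀ x, x ∈ X ↔ (d : ℤ) ∣ t x - s x * t x₀ := by
    intro x
    have hred : s (x - s x • x₀) = 0 := by simp [hsx₀]
    rw [← X.sub_mem_iff_left (X.smul_mem (s x) hx₀), mem_iff_map_of_ker_inf_le hker hred, hT]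
    simp
  refine ⟨d, r, hdm, hrd, Submodule.ext fun x => ?_⟩
  rw [hX, mem_congrSubmodule,
    show t x - r * s x = (t x - s x * t x₀) + s x * (t x₀ - r) by ring,
    dvd_add_left (dvd_mul_of_dvd_right hr _)]

end Congruence

section WeightLattice

variable {n : ℕ}

theorem w_succ (i : Fin n) : w n (i + 1) = Pi.single i 1 := by
  ext k
  simp [w, Pi.single_apply, Fin.ext_iff]

theorem w_eq_zero {j : ℕ} (hj : j = 0 ∨ n < j) : w n j = 0 := by
  ext k
  simp only [w, Pi.zero_apply, ite_eq_right_iff]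
  omega

theorem sig_eq {i : ℕ} (hi : 1 ≤ i) :
    sig n i = w n i + w n (i + 1) - w n (i - 1) - w n (i + 2) := by
  simp only [sig, sroot, two_smul, show i + 1 - 1 = i by omega]
  abel

/-- `c` is indexed like the weights `ω_j`, starting at `1`. -/
def coeffForm (n : ℕ) (c : ℕ → ℤ) : (Fin n → ℤ) →ₗ[ℤ] ℤ :=
  Fintype.linearCombination ℤ fun i : Fin n => c (i + 1)

theorem coeffForm_w {c : ℕ → ℤ} (hc : ∀ j, j = 0 ∨ n < j → c j = 0) (j : ℕ) :
    coeffForm n c (w n j) = c j := by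
  by_cases hj : j = 0 ∨ n < j
  · rw [w_eq_zero hj, map_zero, hc j hj]
  · obtain ⟨i, rfl⟩ : ∃ i : Fin n, j = i + 1 := ⟨⟨j - 1, by omega⟩, by simp; omega⟩
    simp [coeffForm, w_succ]

-- Both coefficient sequences vanish at `0` and beyond `n`, matching `ω_0 = ω_{n+1} = 0`, so they
-- satisfy the same recurrence `c (i+2) = c i + c (i+1) - c (i-1)` as the weights modulo `ℤS⁺`.
def oddCoeff (n j : ℕ) : ℤ := if 1 ≤ j ∧ j ≤ n ∧ j % 2 = 1 then 1 else 0

def halfCoeff (n j : ℕ) : ℤ := if 1 ≤ j ∧ j ≤ n then (j / 2 : ℕ) else 0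

abbrev sForm (n : ℕ) : (Fin n → ℤ) →ₗ[ℤ] ℤ := coeffForm n (oddCoeff n)

abbrev tForm (n : ℕ) : (Fin n → ℤ) →ₗ[ℤ] ℤ := coeffForm n (halfCoeff n)

theorem sForm_w (j : ℕ) : sForm n (w n j) = oddCoeff n j :=
  coeffForm_w (fun j hj => by simp only [oddCoeff]; split_ifs <;> omega) j

theorem tForm_w (j : ℕ) : tForm n (w n j) = halfCoeff n j :=
  coeffForm_w (fun j hj => by simp only [halfCoeff]; split_ifs <;> omega) j

theorem sForm_w_odd {j : ℕ} (hj : 2 * j + 1 ≤ n) : sForm n (w n (2 * j + 1)) = 1 := by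
  rw [sForm_w, oddCoeff, if_pos (by omega)]

theorem tForm_w_odd {j : ℕ} (hj : 2 * j + 1 ≤ n) : tForm n (w n (2 * j + 1)) = j := by
  rw [tForm_w, halfCoeff, if_pos (by omega)]
  congr 1
  omega

theorem sForm_w_two : sForm n (w n 2) = 0 := by
  rw [sForm_w, oddCoeff, if_neg (by omega)]

theorem tForm_w_two (hn : 2 ≤ n) : tForm n (w n 2) = 1 := by
  rw [tForm_w, halfCoeff, if_pos (by omega)]
  rfl

theorem sForm_sig (hn : Odd n) {i : ℕ} (hi : i ∈ Set.Icc 1 (n - 1)) :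
    sForm n (sig n i) = 0 := by
  obtain ⟨hi₁, hi₂⟩ := hi
  have := Nat.odd_iff.mp hn
  simp only [sig_eq hi₁, map_sub, map_add, sForm_w, oddCoeff]
  split_ifs <;> omega

theorem tForm_sig (hn : Odd n) {i : ℕ} (hi : i ∈ Set.Icc 1 (n - 1)) :
    tForm n (sig n i) = if i = n - 1 then ((n + 1) / 2 : ℕ) else 0 := by
  obtain ⟨hi₁, hi₂⟩ := hi
  have := Nat.odd_iff.mp hn
  simp only [sig_eq hi₁, map_sub, map_add, tForm_w, halfCoeff]
  split_ifs <;> omega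

theorem w_sub_mem_ZSplus (j : ℕ) :
    w n j - oddCoeff n j • w n 1 - halfCoeff n j • w n 2 ∈ ZSplus n := by
  induction j using Nat.strong_induction_on with | _ j ih => ?_
  by_cases hj : 3 ≤ j ∧ j ≤ n
  · obtain ⟨i, rfl⟩ : ∃ i, j = i + 2 := ⟨j - 2, by omega⟩
    have hodd :
        oddCoeff n (i + 2) = oddCoeff n i + oddCoeff n (i + 1) - oddCoeff n (i - 1) := by
      simp only [oddCoeff]; split_ifs <;> omega
    have hhalf :
        halfCoeff n (i + 2) = halfCoeff n i + halfCoeff n (i + 1) - halfCoeff n (i - 1) := by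
      simp only [halfCoeff]; split_ifs <;> omega
    have hσ : sig n i ∈ ZSplus n := Submodule.subset_span ⟨i, ⟨by omega, by omega⟩, rfl⟩
    convert (ZSplus n).sub_mem ((ZSplus n).sub_mem ((ZSplus n).add_mem
      (ih i (by omega)) (ih (i + 1) (by omega))) (ih (i - 1) (by omega))) hσ using 1
    rw [hodd, hhalf, sig_eq (by omega)]
    ext k
    simp only [Pi.add_apply, Pi.sub_apply, Pi.smul_apply, smul_eq_mul]
    ring
  · convert (ZSplus n).zero_mem
    ext k
    simp only [w, oddCoeff, halfCoeff, Pi.sub_apply, Pi.smul_apply, smul_eq_mul, Pi.zero_apply]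
    split_ifs <;> omega

theorem sub_smul_sub_smul_mem_ZSplus (x : Fin n → ℤ) :
    x - sForm n x • w n 1 - tForm n x • w n 2 ∈ ZSplus n := by
  let φ : (Fin n → ℤ) →ₗ[ℤ] (Fin n → ℤ) :=
    LinearMap.id - (sForm n).smulRight (w n 1) - (tForm n).smulRight (w n 2)
  suffices ⊤ ≤ (ZSplus n).comap φ from this Submodule.mem_top
  rw [← (Pi.basisFun ℤ (Fin n)).span_eq, Submodule.span_le]
  rintro _ ⟨i, rfl⟩
  rw [Pi.basisFun_apply, ← w_succ]
  simpa [φ, sForm_w, tForm_w] using w_sub_mem_ZSplus (i + 1)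

theorem ker_inf_ker_le_ZSplus :
    LinearMap.ker (sForm n) ⊓ LinearMap.ker (tForm n) ≤ ZSplus n := fun x ⟨hs, ht⟩ => by
  simpa only [LinearMap.mem_ker.mp hs, LinearMap.mem_ker.mp ht, zero_smul, sub_zero] using
    sub_smul_sub_smul_mem_ZSplus x

end WeightLattice

section Classification

variable {n : ℕ}

theorem sig_mem_congrSubmodule (hn : Odd n) {d : ℕ} (hd : d ∣ (n + 1) / 2) (r : ℕ) {i : ℕ}
    (hi : i ∈ Set.Icc 1 (n - 1)) : sig n i ∈ congrSubmodule (sForm n) (tForm n) d r := by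
  rw [mem_congrSubmodule, sForm_sig hn hi, tForm_sig hn hi, mul_zero, sub_zero]
  split_ifs
  · exact Int.natCast_dvd_natCast.mpr hd
  · exact dvd_zero _

theorem finrank_congrSubmodule {d : ℕ} (hd : 0 < d) (r : ℕ) :
    finrank ℤ (congrSubmodule (sForm n) (tForm n) d r) = n :=
  (Submodule.finrank_eq_of_smul_mem _ (by omega) (smul_mem_congrSubmodule d r)).trans
    (finrank_fin_fun ℤ)

theorem surjective_pi_oddCoroots_congrSubmodule (hn : 2 ≤ n) (d r : ℕ) :
    Function.Surjective
      (LinearMap.pi (oddCoroots n (congrSubmodule (sForm n) (tForm n) d r))) := by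
  rw [← LinearMap.range_eq_top, eq_top_iff, ← (Pi.basisFun ℤ _).span_eq, Submodule.span_le]
  rintro _ ⟨j, rfl⟩
  have hj := j.isLt
  -- `ω_{2j+1}` has the right odd coordinates; adding a multiple of `ω_2` fixes its class mod `d`
  have hmem :
      w n (2 * j + 1) + ((r : ℤ) - j) • w n 2 ∈ congrSubmodule (sForm n) (tForm n) d r := by
    rw [mem_congrSubmodule, map_add, map_add, map_smul, map_smul, sForm_w_odd (by omega),
      tForm_w_odd (by omega), sForm_w_two, tForm_w_two hn]
    simp
  refine ⟨⟨_, hmem⟩, funext fun k => ?_⟩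
  simp [oddCoroots, w, Pi.single_apply, Fin.ext_iff]

theorem sForm_eq_one_of_pi_oddCoroots {X : Submodule ℤ (Fin n → ℤ)} {x : X}
    {j : Fin ((n + 1) / 2)} (hx : LinearMap.pi (oddCoroots n X) x = Pi.single j 1) :
    sForm n x = 1 := by
  have hj := j.isLt
  -- `sForm` only sees the coordinates read by the odd coroots, where `x` and `ω_{2j+1}` agree
  have hvanish : sForm n (x - w n (2 * j + 1)) = 0 := by
    rw [sForm, coeffForm, Fintype.linearCombination_apply]
    refine Finset.sum_eq_zero fun i _ => mul_eq_zero.mpr ?_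
    by_cases hi : (i : ℕ) % 2 = 0
    · have hxi := congrFun hx ⟨i / 2, by omega⟩
      simp only [LinearMap.pi_apply, oddCoroots, LinearMap.domRestrict_apply, LinearMap.proj_apply,
        show (⟨2 * (i / 2), _⟩ : Fin n) = i from Fin.ext (by simp; omega)] at hxi
      simp only [Pi.sub_apply, hxi, w, Pi.single_apply, Fin.ext_iff]
      left
      split_ifs <;> omega
    · simp only [oddCoeff]
      right
      split_ifs <;> omega
  rw [map_sub, sub_eq_zero, sForm_w, oddCoeff, if_pos (by omega)] at hvanish
  exact hvanish

theorem exists_eq_congrSubmodule_of_isPartOfBasis (hn : 3 ≤ n) (hno : Odd n)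
    {X : Submodule ℤ (Fin n → ℤ)} (hσ : ∀ i ∈ Set.Icc 1 (n - 1), sig n i ∈ X)
    (hX : IsPartOfBasis (oddCoroots n X)) :
    ∃ d r : ℕ, d ∣ (n + 1) / 2 ∧ r < d ∧ X = congrSubmodule (sForm n) (tForm n) d r := by
  have hZS : ZSplus n ≤ X := Submodule.span_le.mpr fun _ ⟨i, hi, hsig⟩ => hsig ▸ hσ i hi
  have hlast : n - 1 ∈ Set.Icc 1 (n - 1) := ⟨by omega, le_rfl⟩
  obtain ⟨x₀, hx₀⟩ := hX.surjective_pi (Pi.single ⟨0, by omega⟩ 1)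
  exact exists_eq_congrSubmodule (ker_inf_ker_le_ZSplus.trans hZS) x₀.2
    (sForm_eq_one_of_pi_oddCoroots hx₀) (hσ _ hlast) (sForm_sig hno hlast) (by omega)
    (by rw [tForm_sig hno hlast, if_pos rfl])

theorem conditions_iff_exists_eq_congrSubmodule (hn : 3 ≤ n) (hno : Odd n)
    (X : Submodule ℤ (Fin n → ℤ)) :
    (finrank ℤ X = n ∧ (∀ i ∈ Set.Icc 1 (n - 1), sig n i ∈ X) ∧
        IsPartOfBasis (oddCoroots n X)) ↔
      ∃ d r : ℕ, d ∣ (n + 1) / 2 ∧ r < d ∧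
        X = congrSubmodule (sForm n) (tForm n) d r := by
  refine ⟨fun ⟨_, hσ, hX⟩ => exists_eq_congrSubmodule_of_isPartOfBasis hn hno hσ hX, ?_⟩
  rintro ⟨d, r, hd, hr, rfl⟩
  exact ⟨finrank_congrSubmodule (by omega) r, fun i hi => sig_mem_congrSubmodule hno hd r hi,
    isPartOfBasis_of_surjective_pi (surjective_pi_oddCoroots_congrSubmodule (by omega) d r)⟩

end Classification

/-- For `n ≥ 3` odd, the set of full-rank subgroups `X` of the weight lattice of
`SL(n+1)` containing `σ_1, …, σ_{n−1}` and such that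
`{α_1^∨|_X, α_3^∨|_X, …, α_n^∨|_X}` is part of a `ℤ`-basis of `X^*` is finite,
of cardinality `σ((n+1)/2)`, the sum of all positive divisors of `(n+1)/2`. -/
theorem stmt16 (n : ℕ) (hn : 3 ≤ n) (hno : Odd n) :
    {X : Submodule ℤ (Fin n → ℤ) |
        Module.finrank ℤ X = n ∧ (∀ i ∈ Set.Icc 1 (n - 1), sig n i ∈ X) ∧
          IsPartOfBasis (oddCoroots n X)}.Finite ∧
      {X : Submodule ℤ (Fin n → ℤ) |
        Module.finrank ℤ X = n ∧ (∀ i ∈ Set.Icc 1 (n - 1), sig n i ∈ X) ∧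
          IsPartOfBasis (oddCoroots n X)}.ncard
        = ∑ d ∈ Nat.divisors ((n + 1) / 2), d := by
  let params := (Nat.divisors ((n + 1) / 2)).sigma fun d => Finset.range d
  let F : (Σ _ : ℕ, ℕ) → Submodule ℤ (Fin n → ℤ) := fun p =>
    congrSubmodule (sForm n) (tForm n) p.1 p.2
  have hset : {X : Submodule ℤ (Fin n → ℤ) |
      Module.finrank ℤ X = n ∧ (∀ i ∈ Set.Icc 1 (n - 1), sig n i ∈ X) ∧
        IsPartOfBasis (oddCoroots n X)} = ↑(params.image F) := by
    refine Set.ext fun X => (conditions_iff_exists_eq_congrSubmodule hn hno X).trans ?_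
    rw [Finset.coe_image, Set.mem_image]
    constructor
    · rintro ⟨d, r, hd, hr, rfl⟩
      exact ⟨⟨d, r⟩, by simp [params, hd, hr]; omega, rfl⟩
    · rintro ⟨⟨d, r⟩, hp, rfl⟩
      simp only [params, Finset.coe_sigma, Set.mem_sigma_iff, Finset.mem_coe, Nat.mem_divisors,
        Finset.coe_range, Set.mem_Iio] at hp
      exact ⟨d, r, hp.1.1, hp.2, rfl⟩
  have hinj : Set.InjOn F params := by
    rintro ⟨d, r⟩ hp ⟨d', r'⟩ hp' h
    simp only [params, Finset.coe_sigma, Set.mem_sigma_iff, Finset.coe_range, Set.mem_Iio]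
      at hp hp'
    obtain ⟨rfl, rfl⟩ := congrSubmodule_injective
      (by simpa using sForm_w_odd (j := 0) (by omega))
      (by simpa using tForm_w_odd (j := 0) (by omega)) sForm_w_two (tForm_w_two (by omega))
      hp.2 hp'.2 h
    rfl
  rw [hset, Set.ncard_coe_finset, Finset.card_image_of_injOn hinj, Finset.card_sigma]
  exact ⟨Finset.finite_toSet _, by simp⟩
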